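/- For every real μ with 0 < μ < 1, the two-dimensional Lebesgue measure of the region {(N, k) ∈ ℝ² : 1 ≤ N ≤ μ^{−5/3}, 1 ≤ k ≤ μ^{−5/2} N^{−3/2}} equals 2μ^{−5/2} − 3μ^{−5/3} + 1; in particular this measure is asymptotic to 2μ^{−5/2} as μ → 0⁺. -/

import Mathlib

/-!
With `A = μ^(-5/3)` one has `μ^(-5/2) = A^(3/2)`, so the region is
`{1 ≤ N ≤ A, 1 ≤ k ≤ (A/N)^(3/2)}`, whose upper boundary meets `k = 1` exactly at `N = A`.
By Cavalieri its area is `∫₁^A ((A/N)^(3/2) - 1) dN = 2 A^(3/2) - 3 A + 1`. Divided by the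
leading term `2 μ^(-5/2)` this is `1 - (3/2) μ^(5/6) + (1/2) μ^(5/2)`, continuous with value `1`
at `μ = 0`.
-/

open MeasureTheory Filter Real

/-- The region of discrete data `(N, k)` of AdS₇ × S⁴/ℤ__k vacua allowed by the
cutoff `μ`, in the continuum approximation. -/
def ads7Region (μ : ℝ) : Set (ℝ × ℝ) :=
  {p : ℝ × ℝ | 1 ≤ p.1 ∧ p.1 ≤ μ ^ (-(5 : ℝ) / 3) ∧
    1 ≤ p.2 ∧ p.2 ≤ μ ^ (-(5 : ℝ) / 2) * p.1 ^ (-(3 : ℝ) / 2)}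

open Set

section RegionBetweenClosed

variable {α : Type*} [MeasurableSpace α] (μ : Measure α) {f g : α → ℝ} {s : Set α}

theorem volume_region_between_cc_eq_lintegral (hf : Measurable f) (hg : Measurable g)
    (hs : MeasurableSet s) :
    μ.prod volume {p : α × ℝ | p.1 ∈ s ∧ p.2 ∈ Icc (f p.1) (g p.1)}
      = ∫⁻ x in s, ENNReal.ofReal (g x - f x) ∂μ := by
  rw [Measure.prod_apply (measurableSet_region_between_cc hf hg hs), ← lintegral_indicator hs]
  refine lintegral_congr fun x => ?_
  by_cases hx : x ∈ s
  · simp only [preimage_ofPred_eq, hx, true_and, indicator_of_mem]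
    exact Real.volume_Icc
  · simp [hx]

theorem volume_region_between_cc_eq_integral (hf : Measurable f) (hg : Measurable g)
    (f_int : IntegrableOn f s μ) (g_int : IntegrableOn g s μ) (hs : MeasurableSet s)
    (hfg : ∀ x ∈ s, f x ≤ g x) :
    μ.prod volume {p : α × ℝ | p.1 ∈ s ∧ p.2 ∈ Icc (f p.1) (g p.1)}
      = ENNReal.ofReal (∫ x in s, g x - f x ∂μ) := by
  rw [volume_region_between_cc_eq_lintegral μ hf hg hs,
    ofReal_integral_eq_lintegral_ofReal (f := fun x => g x - f x) (g_int.sub f_int)]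
  exact (ae_restrict_iff' hs).2 (Eventually.of_forall fun x hx => sub_nonneg.2 (hfg x hx))

end RegionBetweenClosed

section RpowRegion

variable {A p : ℝ}

def rpowRegion (A p : ℝ) : Set (ℝ × ℝ) :=
  {q : ℝ × ℝ | q.1 ∈ Icc 1 A ∧ q.2 ∈ Icc 1 (A ^ p * q.1 ^ (-p))}

lemma one_le_rpow_mul_rpow_neg {x : ℝ} (hx : 0 < x) (hxA : x ≤ A) (hp : 0 ≤ p) :
    1 ≤ A ^ p * x ^ (-p) := by
  rw [rpow_neg hx.le, ← div_eq_mul_inv, ← div_rpow (hx.le.trans hxA) hx.le]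
  exact one_le_rpow ((one_le_div hx).2 hxA) hp

lemma continuousOn_rpow_mul_rpow_neg : ContinuousOn (fun x : ℝ => A ^ p * x ^ (-p)) (Ioi 0) :=
  fun x hx =>
    (continuousAt_const.mul (continuousAt_rpow_const x _ (Or.inl hx.ne'))).continuousWithinAt

lemma toReal_volume_rpowRegion (hA : 1 ≤ A) (hp : 0 ≤ p) :
    (volume (rpowRegion A p)).toReal = ∫ x in (1 : ℝ)..A, (A ^ p * x ^ (-p) - 1) := by
  have hIcc : Icc 1 A ⊆ Ioi (0 : ℝ) := fun x hx => one_pos.trans_le hx.1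
  have hle : ∀ x ∈ Icc 1 A, (1 : ℝ) ≤ A ^ p * x ^ (-p) :=
    fun x hx => one_le_rpow_mul_rpow_neg (hIcc hx) hx.2 hp
  rw [Measure.volume_eq_prod, rpowRegion,
    volume_region_between_cc_eq_integral volume measurable_const (by fun_prop)
      continuousOn_const.integrableOn_Icc
      ((continuousOn_rpow_mul_rpow_neg.mono hIcc).integrableOn_Icc) measurableSet_Icc hle,
    ENNReal.toReal_ofReal
      (setIntegral_nonneg measurableSet_Icc fun x hx => sub_nonneg.2 (hle x hx)),
    integral_Icc_eq_integral_Ioc, intervalIntegral.integral_of_le hA]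

lemma integral_rpow_mul_rpow_neg_sub_one (hA : 0 < A) (hp : p ≠ 1) :
    ∫ x in (1 : ℝ)..A, (A ^ p * x ^ (-p) - 1) = (A ^ p - A) / (p - 1) - (A - 1) := by
  have hpos : ∀ x ∈ uIcc 1 A, 0 < x := fun x hx => (lt_min one_pos hA).trans_le hx.1
  have hint : IntervalIntegrable (fun x : ℝ => A ^ p * x ^ (-p)) volume 1 A :=
    (continuousOn_rpow_mul_rpow_neg.mono hpos).intervalIntegrable
  have hApow : A ^ p * A ^ (-p + 1) = A := by rw [← rpow_add hA]; simp
  rw [intervalIntegral.integral_sub hint intervalIntegrable_const,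
    intervalIntegral.integral_const_mul,
    integral_rpow (Or.inr ⟨fun h => hp (neg_inj.1 h), fun h => (hpos 0 h).false⟩),
    intervalIntegral.integral_const, one_rpow, smul_eq_mul, mul_one, ← mul_div_assoc, mul_sub,
    hApow, mul_one, show -p + 1 = -(p - 1) by ring, div_neg, ← neg_div, neg_sub]

end RpowRegion

section Ads7

variable {μ : ℝ}

lemma ads7Region_eq_rpowRegion (hμ : 0 ≤ μ) :
    ads7Region μ = rpowRegion (μ ^ (-(5 : ℝ) / 3)) (3 / 2) := by
  have hc : μ ^ (-(5 : ℝ) / 2) = (μ ^ (-(5 : ℝ) / 3)) ^ ((3 : ℝ) / 2) := by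
    rw [← rpow_mul hμ]; norm_num
  ext q
  rw [ads7Region, rpowRegion, hc]
  simp only [mem_ofPred_eq, mem_Icc, neg_div, and_assoc]

lemma toReal_volume_ads7Region (hμ0 : 0 < μ) (hμ1 : μ < 1) :
    (volume (ads7Region μ)).toReal
      = 2 * μ ^ (-(5 : ℝ) / 2) - 3 * μ ^ (-(5 : ℝ) / 3) + 1 := by
  have hA : 1 ≤ μ ^ (-(5 : ℝ) / 3) :=
    one_le_rpow_of_pos_of_le_one_of_nonpos hμ0 hμ1.le (by norm_num)
  have hc : (μ ^ (-(5 : ℝ) / 3)) ^ ((3 : ℝ) / 2) = μ ^ (-(5 : ℝ) / 2) := by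
    rw [← rpow_mul hμ0.le]; norm_num
  rw [ads7Region_eq_rpowRegion hμ0.le, toReal_volume_rpowRegion hA (by norm_num),
    integral_rpow_mul_rpow_neg_sub_one (one_pos.trans_le hA) (by norm_num), hc]
  ring

lemma ads7_area_div_leading_term (hμ : 0 < μ) :
    (2 * μ ^ (-(5 : ℝ) / 2) - 3 * μ ^ (-(5 : ℝ) / 3) + 1) / (2 * μ ^ (-(5 : ℝ) / 2))
      = 1 - 3 / 2 * μ ^ ((5 : ℝ) / 6) + 1 / 2 * μ ^ ((5 : ℝ) / 2) := by
  have h1 : μ ^ (-(5 : ℝ) / 3) = μ ^ (-(5 : ℝ) / 2) * μ ^ ((5 : ℝ) / 6) := by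
    rw [← rpow_add hμ]; norm_num
  have h2 : μ ^ (-(5 : ℝ) / 2) * μ ^ ((5 : ℝ) / 2) = 1 := by
    rw [← rpow_add hμ]; norm_num
  have hc : μ ^ (-(5 : ℝ) / 2) ≠ 0 := (rpow_pos_of_pos hμ _).ne'
  rw [h1, eq_comm, eq_div_iff (mul_ne_zero two_ne_zero hc)]
  linear_combination h2

end Ads7

theorem ads7_region_area :
    (∀ μ : ℝ, 0 < μ → μ < 1 →
      (volume (ads7Region μ)).toReal
        = 2 * μ ^ (-(5 : ℝ) / 2) - 3 * μ ^ (-(5 : ℝ) / 3) + 1)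
    ∧ Tendsto (fun μ : ℝ => (volume (ads7Region μ)).toReal / (2 * μ ^ (-(5 : ℝ) / 2)))
        (nhdsWithin 0 (Set.Ioi 0)) (nhds 1) := by
  refine ⟨fun μ hμ0 hμ1 => toReal_volume_ads7Region hμ0 hμ1, ?_⟩
  have hcont : Continuous fun μ : ℝ =>
      1 - 3 / 2 * μ ^ ((5 : ℝ) / 6) + 1 / 2 * μ ^ ((5 : ℝ) / 2) := by
    fun_prop (disch := norm_num)
  refine ((hcont.tendsto' 0 1 (by norm_num)).mono_left nhdsWithin_le_nhds).congr' ?_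
  filter_upwards [Ioo_mem_nhdsGT one_pos] with μ ⟨hμ0, hμ1⟩
  rw [toReal_volume_ads7Region hμ0 hμ1, ads7_area_div_leading_term hμ0]
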